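/- The subspace H̄(B*) of the Heisenberg double H(B*) of the dual Taft algebra spanned by the elements Ψ^{a,b,c} = F^a κ^b # E^c k^{b−2c} (0 ≤ a, c ≤ p−1, b ∈ ℤ/4pℤ) is closed under multiplication, i.e., it is a subalgebra of H(B*). -/

import Mathlib

/-!
STATEMENT 12: The subspace of the Heisenberg double `H(B*)` of the dual Taft algebra
spanned by `Ψ^{a,b,c} = F^a κ^b # E^c k^{b−2c}` (`0 ≤ a,c ≤ p−1`, `b ∈ ℤ/4pℤ`)
is closed under multiplication, i.e. it is a subalgebra of `H(B*)`.
-/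
noncomputable section

/-- The q-integer `[n]_q`. -/
def qint (q : ℂ) (n : ℕ) : ℂ := (q ^ n - q⁻¹ ^ n) / (q - q⁻¹)

/-- The q-factorial. -/
def qfac (q : ℂ) : ℕ → ℂ
  | 0 => 1
  | n + 1 => qint q (n + 1) * qfac q n

/-- Symmetric Gaussian binomial via the q-Pascal recursion. -/
def qbinom (q : ℂ) : ℕ → ℕ → ℂ
  | _, 0 => 1
  | 0, _ + 1 => 0
  | n + 1, k + 1 => q ^ (k + 1) * qbinom q n (k + 1) + q⁻¹ ^ (n - k) * qbinom q n k

/-- The underlying space of `H(B*)`: the free module on the basis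
`F^a κ^b # E^c k^d`, `0 ≤ a, c ≤ p−1`, `b, d ∈ ℤ/4pℤ`. -/
abbrev HDSpace (p : ℕ) : Type :=
  (Fin p × ZMod (4 * p) × Fin p × ZMod (4 * p)) →₀ ℂ

/-- The basis vector `F^x κ^y # E^z k^w`, declared to vanish when `x ≥ p` or `z ≥ p`
(the relations `F^p = 0`, `E^p = 0`). -/
def belem (p : ℕ) (x : ℕ) (y : ZMod (4 * p)) (z : ℕ) (w : ZMod (4 * p)) : HDSpace p :=
  if hx : x < p then
    if hz : z < p then Finsupp.single (⟨x, hx⟩, y, ⟨z, hz⟩, w) 1 else 0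
  else 0

/-!
In `Ψ^{a,b,c} · Ψ^{a',b',c'}` every term of the smash-product formula is a multiple of
`F^{a+a'-u} κ^{b+b'} # E^{c+c'-u} k^{(b-2c)+(b'-2c')+2u}`, and the `k`-exponent equals
`(b+b') - 2(c+c'-u)`: the shift `+2u` exactly compensates the loss of `u` factors `E`.
So each term is again some `Ψ`, or vanishes because `F^p = E^p = 0`.
-/

theorem sub_two_mul_add_sub_two_mul_add_two_mul {R : Type*} [CommRing R]
    (b b' : R) {c c' u : ℕ} (hu : u ≤ c + c') :
    (b - 2 * (c : R)) + (b' - 2 * (c' : R)) + ((2 * u : ℕ) : R)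
      = (b' + b) - 2 * ((c + c' - u : ℕ) : R) := by
  rw [Nat.cast_sub hu]
  push_cast
  ring

theorem belem_mem_span_Psi (p x z : ℕ) (y : ZMod (4 * p)) :
    belem p x y z (y - 2 * (z : ZMod (4 * p))) ∈
      Submodule.span ℂ (Set.range fun t : Fin p × ZMod (4 * p) × Fin p =>
        belem p t.1 t.2.1 t.2.2 (t.2.1 - 2 * ((t.2.2 : ℕ) : ZMod (4 * p)))) := by
  by_cases hx : x < p
  · by_cases hz : z < p
    · exact Submodule.subset_span ⟨(⟨x, hx⟩, y, ⟨z, hz⟩), rfl⟩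
    · simp [belem, hz]
  · simp [belem, hx]

theorem heisenberg_double_Psi_subalgebra_general
    (p : ℕ)
    (q q2 : ℂ)
    -- `hm` is the Heisenberg double multiplication, given on the basis by the
    -- smash-product formula:
    (hm : HDSpace p →ₗ[ℂ] HDSpace p →ₗ[ℂ] HDSpace p)
    (hm_def : ∀ (r m a c : ℕ) (_ : r < p) (_ : m < p) (_ : a < p) (_ : c < p)
        (s n b d : ZMod (4 * p)),
      hm (belem p r s m n) (belem p a b c d)
        = ∑ u ∈ Finset.range (min m a + 1),
            (q2 ^ (-(u * ((u : ℤ) - 1))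
                  - (b.val : ℤ) * n.val + 2 * c * n.val
                  + 2 * a * ((s.val : ℤ) - n.val)
                  + 2 * u * (2 * (c : ℤ) - a - b.val + m - s.val) : ℤ)
              * qbinom q m u * qbinom q a u * qfac q u * ((q - q⁻¹) ^ u)⁻¹)
            • belem p (a + r - u) (b + s) (m + c - u) (n + d + (2 * u : ℕ)))
    -- the elements `Ψ^{a,b,c} = F^a κ^b # E^c k^{b−2c}`
    (Ψ : Fin p → ZMod (4 * p) → Fin p → HDSpace p)
    (hΨ : ∀ (a : Fin p) (b : ZMod (4 * p)) (c : Fin p),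
      Ψ a b c = belem p (a : ℕ) b (c : ℕ) (b - 2 * ((c : ℕ) : ZMod (4 * p)))) :
    ∀ (a a' : Fin p) (b b' : ZMod (4 * p)) (c c' : Fin p),
      hm (Ψ a b c) (Ψ a' b' c') ∈
        Submodule.span ℂ
          (Set.range fun t : Fin p × ZMod (4 * p) × Fin p => Ψ t.1 t.2.1 t.2.2) := by
  intro a a' b b' c c'
  simp_rw [hΨ]
  rw [hm_def _ _ _ _ a.isLt c.isLt a'.isLt c'.isLt]
  refine Submodule.sum_mem _ fun u hu => Submodule.smul_mem _ _ ?_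
  have hu : u ≤ (c : ℕ) + c' :=
    (Nat.lt_succ_iff.mp (Finset.mem_range.mp hu)).trans ((min_le_left _ _).trans le_self_add)
  rw [sub_two_mul_add_sub_two_mul_add_two_mul b b' hu]
  exact belem_mem_span_Psi p _ _ _

theorem heisenberg_double_Psi_subalgebra
    (p : ℕ) (hp : 2 ≤ p)
    (q q2 : ℂ)
    (hq : q = Complex.exp (Real.pi * Complex.I / p))
    (hq2 : q2 = Complex.exp (Real.pi * Complex.I / (2 * p)))
    -- `hm` is the Heisenberg double multiplication, given on the basis by the
    -- smash-product formula:
    (hm : HDSpace p →ₗ[ℂ] HDSpace p →ₗ[ℂ] HDSpace p)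
    (hm_def : ∀ (r m a c : ℕ) (_ : r < p) (_ : m < p) (_ : a < p) (_ : c < p)
        (s n b d : ZMod (4 * p)),
      hm (belem p r s m n) (belem p a b c d)
        = ∑ u ∈ Finset.range (min m a + 1),
            (q2 ^ (-(u * ((u : ℤ) - 1))
                  - (b.val : ℤ) * n.val + 2 * c * n.val
                  + 2 * a * ((s.val : ℤ) - n.val)
                  + 2 * u * (2 * (c : ℤ) - a - b.val + m - s.val) : ℤ)
              * qbinom q m u * qbinom q a u * qfac q u * ((q - q⁻¹) ^ u)⁻¹)
            • belem p (a + r - u) (b + s) (m + c - u) (n + d + (2 * u : ℕ)))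
    -- the elements `Ψ^{a,b,c} = F^a κ^b # E^c k^{b−2c}`
    (Ψ : Fin p → ZMod (4 * p) → Fin p → HDSpace p)
    (hΨ : ∀ (a : Fin p) (b : ZMod (4 * p)) (c : Fin p),
      Ψ a b c = belem p (a : ℕ) b (c : ℕ) (b - 2 * ((c : ℕ) : ZMod (4 * p)))) :
    ∀ (a a' : Fin p) (b b' : ZMod (4 * p)) (c c' : Fin p),
      hm (Ψ a b c) (Ψ a' b' c') ∈
        Submodule.span ℂ
          (Set.range fun t : Fin p × ZMod (4 * p) × Fin p => Ψ t.1 t.2.1 t.2.2) :=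
  heisenberg_double_Psi_subalgebra_general p q q2 hm hm_def Ψ hΨ
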